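/- Let A₁ and A₂ be (possibly unbounded) self-adjoint operators on a Hilbert space H with the same domain such that A₁ - A₂ extends to a Hilbert–Schmidt operator. For ε > 0 define A_j(ε) = A_j(I - iεA_j)^{-1} (a bounded operator). Then A₁(ε) - A₂(ε) converges to (the continuous extension of) A₁ - A₂ in the Hilbert–Schmidt norm as ε → 0⁺. -/

import Mathlib

open Filter Topology

variable {H : Type*} [NormedAddCommGroup H] [InnerProductSpace ℂ H] [CompleteSpace H]

local notation "⟪" x ", " y "⟫" => @inner ℂ _ _ x y
set_option linter.unusedSectionVars false
lemma pmap_symm {A : H →ₗ.[ℂ] H} (hA : IsSelfAdjoint A) :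
    ∀ x y : A.domain, ⟪A x, (y : H)⟫ = ⟪(x : H), A y⟫ := by
  have hd := hA.dense_domain
  have h := LinearPMap.adjoint_isFormalAdjoint (T := A) hd
  rw [LinearPMap.isSelfAdjoint_def] at hA
  rw [hA] at h
  exact h

lemma strong_lim (Q : ℝ → H →L[ℂ] H) (s : Set H) (hs : Dense s)
    (hc : ∀ ε : ℝ, 0 < ε → ∀ u : H, ‖Q ε u‖ ≤ ‖u‖)
    (hx : ∀ x ∈ s, ∃ C : ℝ, 0 ≤ C ∧ ∀ ε : ℝ, 0 < ε → ‖Q ε x - x‖ ≤ ε * C)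
    (v : H) : Tendsto (fun ε => ‖Q ε v - v‖) (𝓝[>] (0:ℝ)) (𝓝 0) := by
  rw [Metric.tendsto_nhds]
  intro δ hδ
  obtain ⟨x, hxs, hdx⟩ := Metric.mem_closure_iff.1 (hs v) (δ/3) (by linarith)
  obtain ⟨C, hC0, hC⟩ := hx x hxs
  have hmem : Set.Ioo (0:ℝ) (δ/(3*(C+1))) ∈ 𝓝[>] (0:ℝ) :=
    Ioo_mem_nhdsGT_of_mem ⟨le_refl 0, by positivity⟩
  filter_upwards [hmem] with ε hε
  obtain ⟨hε0, hε1⟩ := hε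
  have h1 : Q ε v - v = Q ε (v - x) + (Q ε x - x) + (x - v) := by
    rw [map_sub]; abel
  have h2 : ‖Q ε v - v‖ ≤ ‖v - x‖ + ‖Q ε x - x‖ + ‖x - v‖ := by
    rw [h1]
    have ha := norm_add_le (Q ε (v - x) + (Q ε x - x)) (x - v)
    have hb := norm_add_le (Q ε (v - x)) (Q ε x - x)
    have h3 := hc ε hε0 (v - x)
    linarith
  have hvx : ‖v - x‖ < δ/3 := by rwa [dist_eq_norm] at hdx
  have hxv : ‖x - v‖ < δ/3 := by rwa [norm_sub_rev]
  have hQx : ‖Q ε x - x‖ ≤ ε * C := hC ε hε0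
  have hεC : ε * C < δ/3 := by
    have : ε * C ≤ ε * (C+1) := by nlinarith
    have h4 : ε * (C+1) < δ/(3*(C+1)) * (C+1) := by
      apply mul_lt_mul_of_pos_right hε1; linarith
    have h5 : δ/(3*(C+1)) * (C+1) = δ/3 := by field_simp
    linarith
  have : ‖Q ε v - v‖ < δ := by linarith
  simpa [Real.dist_eq, abs_of_nonneg (norm_nonneg _)] using this
lemma parseval_sq {ι : Type*} (b : HilbertBasis ι ℂ H) (v : H) :
    HasSum (fun j => ‖⟪b j, v⟫‖ ^ 2) (‖v‖ ^ 2) := by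
  have h := (b.hasSum_inner_mul_inner v v).mapL Complex.reCLM
  have h1 : (fun j => ‖⟪b j, v⟫‖ ^ 2)
      = fun j => Complex.reCLM (⟪v, b j⟫ * ⟪b j, v⟫) := by
    funext j
    rw [← inner_conj_symm (b j) v, RCLike.mul_conj]
    rw [RCLike.norm_conj]
    simp [← Complex.ofReal_pow]
  have h2 : Complex.reCLM ⟪v, v⟫ = ‖v‖ ^ 2 := by
    simpa using inner_self_eq_norm_sq (𝕜 := ℂ) v
  rw [h2] at h
  rw [h1]
  exact h

lemma parseval_ofReal {ι : Type*} (b : HilbertBasis ι ℂ H) (v : H) :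
    ∑' j, ENNReal.ofReal (‖⟪b j, v⟫‖ ^ 2) = ENNReal.ofReal (‖v‖ ^ 2) := by
  rw [← ENNReal.ofReal_tsum_of_nonneg (fun j => sq_nonneg _) (parseval_sq b v).summable,
    (parseval_sq b v).tsum_eq]

lemma hs_adjoint_ofReal {ι : Type*} (b : HilbertBasis ι ℂ H) (T : H →L[ℂ] H) :
    ∑' i, ENNReal.ofReal (‖T (b i)‖ ^ 2)
      = ∑' j, ENNReal.ofReal (‖(ContinuousLinearMap.adjoint T) (b j)‖ ^ 2) := by
  calc ∑' i, ENNReal.ofReal (‖T (b i)‖ ^ 2)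
      = ∑' i, ∑' j, ENNReal.ofReal (‖⟪b j, T (b i)⟫‖ ^ 2) :=
        tsum_congr fun i => (parseval_ofReal b (T (b i))).symm
    _ = ∑' j, ∑' i, ENNReal.ofReal (‖⟪b j, T (b i)⟫‖ ^ 2) := ENNReal.tsum_comm
    _ = ∑' j, ∑' i, ENNReal.ofReal (‖⟪b i, (ContinuousLinearMap.adjoint T) (b j)⟫‖ ^ 2) := by
        refine tsum_congr fun j => tsum_congr fun i => ?_
        rw [norm_inner_symm (b i), ContinuousLinearMap.adjoint_inner_left]
    _ = ∑' j, ENNReal.ofReal (‖(ContinuousLinearMap.adjoint T) (b j)‖ ^ 2) :=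
        tsum_congr fun j => parseval_ofReal b _

lemma summable_adjoint_sq {ι : Type*} {b : HilbertBasis ι ℂ H} {T : H →L[ℂ] H}
    (h : Summable fun i => ‖T (b i)‖ ^ 2) :
    (Summable fun j => ‖(ContinuousLinearMap.adjoint T) (b j)‖ ^ 2) ∧
      ∑' j, ‖(ContinuousLinearMap.adjoint T) (b j)‖ ^ 2 = ∑' i, ‖T (b i)‖ ^ 2 := by
  have he := hs_adjoint_ofReal b T
  have h1 : ∑' i, ENNReal.ofReal (‖T (b i)‖ ^ 2) = ENNReal.ofReal (∑' i, ‖T (b i)‖ ^ 2) :=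
    (ENNReal.ofReal_tsum_of_nonneg (fun _ => sq_nonneg _) h).symm
  have hfin : ∑' j, ENNReal.ofReal (‖(ContinuousLinearMap.adjoint T) (b j)‖ ^ 2) ≠ ⊤ := by
    rw [← he, h1]; exact ENNReal.ofReal_ne_top
  have hs2 : Summable fun j => ‖(ContinuousLinearMap.adjoint T) (b j)‖ ^ 2 := by
    refine (ENNReal.summable_toReal hfin).congr fun j => ?_
    rw [ENNReal.toReal_ofReal (sq_nonneg _)]
  refine ⟨hs2, ?_⟩
  have h2 := ENNReal.ofReal_tsum_of_nonneg (fun _ : ι => sq_nonneg _) hs2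
  rw [h1, ← h2] at he
  exact ((ENNReal.ofReal_eq_ofReal_iff (tsum_nonneg fun _ => sq_nonneg _)
    (tsum_nonneg fun _ => sq_nonneg _)).1 he.symm)
lemma inner_self_real {A : H →ₗ.[ℂ] H}
    (symm : ∀ x y : A.domain, ⟪A x, (y : H)⟫ = ⟪(x : H), A y⟫) (x : A.domain) :
    (⟪(x : H), A x⟫).im = 0 := by
  have h : (starRingEnd ℂ) ⟪(x : H), A x⟫ = ⟪(x : H), A x⟫ := by
    rw [inner_conj_symm, symm]
  exact Complex.conj_eq_iff_im.1 h

lemma contraction {A : H →ₗ.[ℂ] H}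
    (symm : ∀ x y : A.domain, ⟪A x, (y : H)⟫ = ⟪(x : H), A y⟫)
    {R : H →L[ℂ] H} {ε : ℝ} (hε : 0 < ε)
    (hr : ∀ u : H, ∃ h : R u ∈ A.domain, R u - (Complex.I * (ε : ℂ)) • A ⟨R u, h⟩ = u) :
    ∀ u, ‖R u‖ ≤ ‖u‖ := by
  intro u
  obtain ⟨h, hu⟩ := hr u
  set x : A.domain := ⟨R u, h⟩ with hx
  have him := inner_self_real symm x
  have hre : Complex.re ⟪(x : H), (Complex.I * (ε : ℂ)) • A x⟫ = 0 := by
    rw [inner_smul_right]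
    simp [Complex.mul_re, Complex.mul_im, him]
  have hnorm : ‖u‖ ^ 2 = ‖(x : H)‖ ^ 2 - 2 * Complex.re ⟪(x : H), (Complex.I * (ε : ℂ)) • A x⟫
      + ‖(Complex.I * (ε : ℂ)) • A x‖ ^ 2 := by
    rw [← hu]; exact norm_sub_sq (𝕜 := ℂ) _ _
  have h2 : ‖(x : H)‖ ^ 2 ≤ ‖u‖ ^ 2 := by rw [hnorm, hre]; nlinarith [sq_nonneg ‖(Complex.I * (ε : ℂ)) • A x‖]
  have h3 : ‖(x : H)‖ ≤ ‖u‖ := by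
    refine le_of_pow_le_pow_left₀ (n := 2) two_ne_zero (norm_nonneg u) h2
  exact h3

lemma dom_bound {A : H →ₗ.[ℂ] H}
    {R : H →L[ℂ] H} {ε : ℝ} (hε : 0 < ε)
    (hcontr : ∀ u, ‖R u‖ ≤ ‖u‖)
    (hl : ∀ x : A.domain, R ((x : H) - (Complex.I * (ε : ℂ)) • A x) = (x : H))
    (x : A.domain) : ‖R (x : H) - (x : H)‖ ≤ ε * ‖A x‖ := by
  have h1 : R (x : H) - (x : H) = (Complex.I * (ε : ℂ)) • R (A x) := by
    have h2 : R (x : H) - R ((x : H) - (Complex.I * (ε : ℂ)) • A x)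
        = R ((Complex.I * (ε : ℂ)) • A x) := by
      rw [← map_sub]; congr 1; abel
    rw [hl x] at h2
    rw [h2, map_smul]
  rw [h1, norm_smul]
  have hc : ‖Complex.I * (ε : ℂ)‖ = ε := by
    rw [norm_mul, Complex.norm_I, Complex.norm_real, one_mul, Real.norm_eq_abs, abs_of_pos hε]
  rw [hc]
  exact mul_le_mul_of_nonneg_left (hcontr _) hε.le
lemma adjoint_dom_eq {A : H →ₗ.[ℂ] H}
    (symm : ∀ x y : A.domain, ⟪A x, (y : H)⟫ = ⟪(x : H), A y⟫)
    {R : H →L[ℂ] H} {ε : ℝ}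
    (hr : ∀ u : H, ∃ h : R u ∈ A.domain, R u - (Complex.I * (ε : ℂ)) • A ⟨R u, h⟩ = u)
    (x : A.domain) :
    (ContinuousLinearMap.adjoint R) ((x : H) + (Complex.I * (ε : ℂ)) • A x) = (x : H) := by
  apply ext_inner_right ℂ
  intro w
  rw [ContinuousLinearMap.adjoint_inner_left]
  obtain ⟨hw, hww⟩ := hr w
  set z : A.domain := ⟨R w, hw⟩ with hz
  conv_rhs => rw [← hww]
  rw [inner_add_left, inner_smul_left, inner_sub_right, inner_smul_right]
  have hsym : ⟪A x, R w⟫ = ⟪(x : H), A z⟫ := symm x z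
  rw [hsym]
  have hconj : (starRingEnd ℂ) (Complex.I * (ε : ℂ)) = -(Complex.I * (ε : ℂ)) := by
    simp [Complex.conj_ofReal]
  rw [hconj]; ring

lemma adjoint_dom_bound {A : H →ₗ.[ℂ] H} {P : H →L[ℂ] H} {ε : ℝ} (hε : 0 < ε)
    (hcontr : ∀ u, ‖P u‖ ≤ ‖u‖)
    (hl : ∀ x : A.domain, P ((x : H) + (Complex.I * (ε : ℂ)) • A x) = (x : H))
    (x : A.domain) : ‖P (x : H) - (x : H)‖ ≤ ε * ‖A x‖ := by
  have h2 : P (x : H) - P ((x : H) + (Complex.I * (ε : ℂ)) • A x)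
      = P (-((Complex.I * (ε : ℂ)) • A x)) := by
    rw [← map_sub]; congr 1; abel
  rw [hl x] at h2
  rw [h2, map_neg, map_smul, norm_neg, norm_smul]
  have hc : ‖Complex.I * (ε : ℂ)‖ = ε := by
    rw [norm_mul, Complex.norm_I, Complex.norm_real, one_mul, Real.norm_eq_abs, abs_of_pos hε]
  rw [hc]
  exact mul_le_mul_of_nonneg_left (hcontr _) hε.le


/-- The Hilbert–Schmidt norm of an operator, computed with respect to a Hilbert basis `b`. -/
noncomputable def hsNorm {ι : Type*} (b : HilbertBasis ι ℂ H) (T : H →L[ℂ] H) : ℝ :=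
  Real.sqrt (∑' i, ‖T (b i)‖ ^ 2)

/-- `T` belongs to the Hilbert–Schmidt class `S₂` (w.r.t. the Hilbert basis `b`). -/
def IsHS {H : Type*} [NormedAddCommGroup H] [InnerProductSpace ℂ H] [CompleteSpace H]
    {ι : Type*} (b : HilbertBasis ι ℂ H) (T : H →L[ℂ] H) : Prop :=
  Summable fun i => ‖T (b i)‖ ^ 2

/-- Let `A₁, A₂` be self-adjoint operators with the same domain whose
difference extends to a Hilbert–Schmidt operator `D`.  For `ε > 0` let
`R_j ε = (I - iεA_j)⁻¹` (characterized by the resolvent identities) and let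
`T_j ε = A_j (I - iεA_j)⁻¹` (i.e. `T_j ε u = A_j (R_j ε u)`).  Then
`T₁ ε - T₂ ε → D` in the Hilbert–Schmidt norm as `ε → 0⁺`. -/
theorem stmt_4 {ι : Type*} (b : HilbertBasis ι ℂ H)
    (A₁ A₂ : H →ₗ.[ℂ] H) (hA₁ : IsSelfAdjoint A₁) (hA₂ : IsSelfAdjoint A₂)
    (hdom : A₁.domain = A₂.domain)
    (D : H →L[ℂ] H) (hD : IsHS b D)
    (hDext : ∀ x : A₁.domain, D x = A₁ x - A₂ ⟨(x : H), hdom ▸ x.2⟩)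
    (R₁ R₂ T₁ T₂ : ℝ → (H →L[ℂ] H))
    (hR₁ : ∀ ε : ℝ, 0 < ε → (∀ x : A₁.domain,
        R₁ ε ((x : H) - (Complex.I * (ε : ℂ)) • A₁ x) = (x : H)) ∧
      ∀ u : H, ∃ h : R₁ ε u ∈ A₁.domain,
        R₁ ε u - (Complex.I * (ε : ℂ)) • A₁ ⟨R₁ ε u, h⟩ = u)
    (hR₂ : ∀ ε : ℝ, 0 < ε → (∀ x : A₂.domain,
        R₂ ε ((x : H) - (Complex.I * (ε : ℂ)) • A₂ x) = (x : H)) ∧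
      ∀ u : H, ∃ h : R₂ ε u ∈ A₂.domain,
        R₂ ε u - (Complex.I * (ε : ℂ)) • A₂ ⟨R₂ ε u, h⟩ = u)
    (hT₁ : ∀ ε : ℝ, 0 < ε → ∀ u : H,
      ∃ h : R₁ ε u ∈ A₁.domain, T₁ ε u = A₁ ⟨R₁ ε u, h⟩)
    (hT₂ : ∀ ε : ℝ, 0 < ε → ∀ u : H,
      ∃ h : R₂ ε u ∈ A₂.domain, T₂ ε u = A₂ ⟨R₂ ε u, h⟩) :
    Tendsto (fun ε : ℝ => hsNorm b (T₁ ε - T₂ ε - D)) (𝓝[>] (0 : ℝ)) (𝓝 0) := by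
  have hDs : Summable fun i => ‖D (b i)‖ ^ 2 := hD
  set S : ℝ → H →L[ℂ] H := fun ε => ContinuousLinearMap.adjoint (R₂ ε) with hS
  set Dd : H →L[ℂ] H := ContinuousLinearMap.adjoint D with hDd
  have symm₁ := pmap_symm hA₁
  have symm₂ := pmap_symm hA₂
  have contr₁ : ∀ ε : ℝ, 0 < ε → ∀ u, ‖R₁ ε u‖ ≤ ‖u‖ :=
    fun ε hε => contraction symm₁ hε (hR₁ ε hε).2
  have contr₂ : ∀ ε : ℝ, 0 < ε → ∀ u, ‖R₂ ε u‖ ≤ ‖u‖ :=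
    fun ε hε => contraction symm₂ hε (hR₂ ε hε).2
  have contrS : ∀ ε : ℝ, 0 < ε → ∀ u, ‖S ε u‖ ≤ ‖u‖ := by
    intro ε hε u
    have hnorm : ‖S ε‖ = ‖R₂ ε‖ := ContinuousLinearMap.adjoint.norm_map (R₂ ε)
    have hle : ‖R₂ ε‖ ≤ 1 :=
      ContinuousLinearMap.opNorm_le_bound _ zero_le_one (fun u => by simpa using contr₂ ε hε u)
    calc ‖S ε u‖ ≤ ‖S ε‖ * ‖u‖ := (S ε).le_opNorm u
      _ ≤ 1 * ‖u‖ := by rw [hnorm]; exact mul_le_mul_of_nonneg_right hle (norm_nonneg _)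
      _ = ‖u‖ := one_mul _
  -- strong convergence of R₁ and S to the identity
  have sR₁ : ∀ v, Tendsto (fun ε => ‖R₁ ε v - v‖) (𝓝[>] (0:ℝ)) (𝓝 0) := by
    refine strong_lim R₁ (A₁.domain : Set H) hA₁.dense_domain contr₁ ?_
    intro x hx
    refine ⟨‖A₁ ⟨x, hx⟩‖, norm_nonneg _, fun ε hε => ?_⟩
    exact dom_bound hε (contr₁ ε hε) (hR₁ ε hε).1 ⟨x, hx⟩
  have sS : ∀ v, Tendsto (fun ε => ‖S ε v - v‖) (𝓝[>] (0:ℝ)) (𝓝 0) := by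
    refine strong_lim S (A₂.domain : Set H) hA₂.dense_domain contrS ?_
    intro x hx
    refine ⟨‖A₂ ⟨x, hx⟩‖, norm_nonneg _, fun ε hε => ?_⟩
    exact adjoint_dom_bound hε (contrS ε hε)
      (fun y => adjoint_dom_eq symm₂ (hR₂ ε hε).2 y) ⟨x, hx⟩
  -- the key algebraic identity
  have keyId : ∀ ε : ℝ, 0 < ε → ∀ u : H,
      T₁ ε u - T₂ ε u = R₁ ε (D (R₂ ε u)) := by
    intro ε hε u
    set c : ℂ := Complex.I * (ε : ℂ) with hc
    have hcne : c ≠ 0 :=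
      mul_ne_zero Complex.I_ne_zero (by exact_mod_cast ne_of_gt hε)
    obtain ⟨h₂, hu₂⟩ := (hR₂ ε hε).2 u
    set y : H := R₂ ε u with hy
    have hy₁ : y ∈ A₁.domain := by rw [hdom]; exact h₂
    set y₁ : A₁.domain := ⟨y, hy₁⟩ with hy₁'
    set y₂ : A₂.domain := ⟨y, h₂⟩ with hy₂'
    have hDy : D y = A₁ y₁ - A₂ y₂ := hDext y₁
    have h5 : R₁ ε (y - c • A₁ y₁) = y := (hR₁ ε hε).1 y₁
    have hrepr : u = (y - c • A₁ y₁) + c • (D y) := by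
      rw [hDy, smul_sub, ← hu₂]; abel
    have h6 : R₁ ε u = y + c • R₁ ε (D y) := by
      conv_lhs => rw [hrepr]
      rw [map_add, h5, map_smul]
    obtain ⟨k₁, hk₁⟩ := hT₁ ε hε u
    obtain ⟨k₁', hk₁''⟩ := (hR₁ ε hε).2 u
    have e₁ : c • T₁ ε u = R₁ ε u - u := by
      rw [hk₁]
      have hAq : A₁ ⟨R₁ ε u, k₁⟩ = A₁ ⟨R₁ ε u, k₁'⟩ := rfl
      rw [hAq]
      have h7 := sub_sub_cancel (R₁ ε u) (c • A₁ ⟨R₁ ε u, k₁'⟩)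
      rw [hk₁''] at h7
      exact h7.symm
    obtain ⟨k₂, hk₂⟩ := hT₂ ε hε u
    obtain ⟨k₂', hk₂''⟩ := (hR₂ ε hε).2 u
    have e₂ : c • T₂ ε u = R₂ ε u - u := by
      rw [hk₂]
      have hAq : A₂ ⟨R₂ ε u, k₂⟩ = A₂ ⟨R₂ ε u, k₂'⟩ := rfl
      rw [hAq]
      have h7 := sub_sub_cancel (R₂ ε u) (c • A₂ ⟨R₂ ε u, k₂'⟩)
      rw [hk₂''] at h7
      exact h7.symm
    have hfin : c • (T₁ ε u - T₂ ε u) = c • R₁ ε (D (R₂ ε u)) := by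
      rw [smul_sub, e₁, e₂, h6]; abel
    exact smul_right_injective H hcne hfin
  -- summability lemmas
  have hDdSummable : Summable fun j => ‖Dd (b j)‖ ^ 2 := by
    rw [hDd]; exact (summable_adjoint_sq hDs).1
  have hHsum : ∀ ε : ℝ, 0 < ε → Summable fun i => ‖R₁ ε (D (b i)) - D (b i)‖ ^ 2 := by
    intro ε hε
    refine Summable.of_nonneg_of_le (fun i => sq_nonneg _) (fun i => ?_) (hDs.mul_left 4)
    have h1 := contr₁ ε hε (D (b i))
    have h2 := norm_sub_le (R₁ ε (D (b i))) (D (b i))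
    nlinarith [norm_nonneg (R₁ ε (D (b i)) - D (b i)), norm_nonneg (D (b i))]
  have hGsum : ∀ ε : ℝ, 0 < ε → Summable fun j => ‖S ε (Dd (b j)) - Dd (b j)‖ ^ 2 := by
    intro ε hε
    refine Summable.of_nonneg_of_le (fun j => sq_nonneg _) (fun j => ?_) (hDdSummable.mul_left 4)
    have h1 := contrS ε hε (Dd (b j))
    have h2 := norm_sub_le (S ε (Dd (b j))) (Dd (b j))
    nlinarith [norm_nonneg (S ε (Dd (b j)) - Dd (b j)), norm_nonneg (Dd (b j))]
  -- dominated convergence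
  have Htends : Tendsto (fun ε => ∑' i, ‖R₁ ε (D (b i)) - D (b i)‖ ^ 2)
      (𝓝[>] (0:ℝ)) (𝓝 0) := by
    have h := tendsto_tsum_of_dominated_convergence
      (𝓕 := 𝓝[>] (0:ℝ)) (f := fun ε i => ‖R₁ ε (D (b i)) - D (b i)‖ ^ 2)
      (g := fun _ => (0:ℝ)) (bound := fun i => 4 * ‖D (b i)‖ ^ 2)
      (hDs.mul_left 4) (fun i => by simpa using (sR₁ (D (b i))).pow 2) ?_
    · simpa using h
    · filter_upwards [self_mem_nhdsWithin] with ε (hε : ε ∈ Set.Ioi (0:ℝ))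
      intro i
      rw [Real.norm_of_nonneg (sq_nonneg _)]
      have h1 := contr₁ ε hε (D (b i))
      have h2 := norm_sub_le (R₁ ε (D (b i))) (D (b i))
      nlinarith [norm_nonneg (R₁ ε (D (b i)) - D (b i)), norm_nonneg (D (b i))]
  have Gtends : Tendsto (fun ε => ∑' j, ‖S ε (Dd (b j)) - Dd (b j)‖ ^ 2)
      (𝓝[>] (0:ℝ)) (𝓝 0) := by
    have h := tendsto_tsum_of_dominated_convergence
      (𝓕 := 𝓝[>] (0:ℝ)) (f := fun ε j => ‖S ε (Dd (b j)) - Dd (b j)‖ ^ 2)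
      (g := fun _ => (0:ℝ)) (bound := fun j => 4 * ‖Dd (b j)‖ ^ 2)
      (hDdSummable.mul_left 4) (fun j => by simpa using (sS (Dd (b j))).pow 2) ?_
    · simpa using h
    · filter_upwards [self_mem_nhdsWithin] with ε (hε : ε ∈ Set.Ioi (0:ℝ))
      intro j
      rw [Real.norm_of_nonneg (sq_nonneg _)]
      have h1 := contrS ε hε (Dd (b j))
      have h2 := norm_sub_le (S ε (Dd (b j))) (Dd (b j))
      nlinarith [norm_nonneg (S ε (Dd (b j)) - Dd (b j)), norm_nonneg (Dd (b j))]
  -- the main estimate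
  have key2 : ∀ ε : ℝ, 0 < ε →
      ∑' i, ‖(T₁ ε - T₂ ε - D) (b i)‖ ^ 2
        ≤ 2 * (∑' j, ‖S ε (Dd (b j)) - Dd (b j)‖ ^ 2)
          + 2 * (∑' i, ‖R₁ ε (D (b i)) - D (b i)‖ ^ 2) := by
    intro ε hε
    set T' : H →L[ℂ] H := D ∘L (R₂ ε - 1) with hT'
    have hT'app : ∀ v, T' v = D (R₂ ε v - v) := fun v => by simp [hT']
    have hadj : ContinuousLinearMap.adjoint T' = (S ε - 1) ∘L Dd := by
      rw [hT', ContinuousLinearMap.adjoint_comp]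
      congr 1
      rw [map_sub, ContinuousLinearMap.one_def, ContinuousLinearMap.adjoint_id,
        ← ContinuousLinearMap.one_def]
    have hadjapp : ∀ j, (ContinuousLinearMap.adjoint T') (b j) = S ε (Dd (b j)) - Dd (b j) := by
      intro j; rw [hadj]; simp
    have hadjS : Summable fun j => ‖(ContinuousLinearMap.adjoint T') (b j)‖ ^ 2 := by
      refine (hGsum ε hε).congr fun j => ?_
      rw [hadjapp]
    have hT'Summ_and := summable_adjoint_sq (T := ContinuousLinearMap.adjoint T') hadjS
    rw [ContinuousLinearMap.adjoint_adjoint] at hT'Summ_and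
    obtain ⟨hT'sum, hT'tsum⟩ := hT'Summ_and
    have hpt : ∀ i, ‖(T₁ ε - T₂ ε - D) (b i)‖ ^ 2
        ≤ 2 * ‖T' (b i)‖ ^ 2 + 2 * ‖R₁ ε (D (b i)) - D (b i)‖ ^ 2 := by
      intro i
      have happ : (T₁ ε - T₂ ε - D) (b i) = R₁ ε (D (R₂ ε (b i))) - D (b i) := by
        simp only [ContinuousLinearMap.sub_apply]
        rw [keyId ε hε (b i)]
      rw [happ]
      have h2 : R₁ ε (D (R₂ ε (b i))) - D (b i)
          = R₁ ε (D (R₂ ε (b i)) - D (b i)) + (R₁ ε (D (b i)) - D (b i)) := by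
        rw [map_sub]; abel
      have h3 : ‖R₁ ε (D (R₂ ε (b i)) - D (b i))‖ ≤ ‖T' (b i)‖ := by
        rw [hT'app]
        refine le_trans (contr₁ ε hε _) (le_of_eq ?_)
        rw [← map_sub]
      have h1 : ‖R₁ ε (D (R₂ ε (b i))) - D (b i)‖
          ≤ ‖T' (b i)‖ + ‖R₁ ε (D (b i)) - D (b i)‖ := by
        rw [h2]
        exact le_trans (norm_add_le _ _) (by linarith)
      nlinarith [norm_nonneg (T' (b i)), norm_nonneg (R₁ ε (D (b i)) - D (b i)),
        norm_nonneg (R₁ ε (D (R₂ ε (b i))) - D (b i)),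
        sq_nonneg (‖T' (b i)‖ - ‖R₁ ε (D (b i)) - D (b i)‖)]
    have hsum2 : Summable fun i =>
        2 * ‖T' (b i)‖ ^ 2 + 2 * ‖R₁ ε (D (b i)) - D (b i)‖ ^ 2 :=
      (hT'sum.mul_left 2).add ((hHsum ε hε).mul_left 2)
    have hXsum : Summable fun i => ‖(T₁ ε - T₂ ε - D) (b i)‖ ^ 2 :=
      Summable.of_nonneg_of_le (fun i => sq_nonneg _) hpt hsum2
    calc ∑' i, ‖(T₁ ε - T₂ ε - D) (b i)‖ ^ 2
        ≤ ∑' i, (2 * ‖T' (b i)‖ ^ 2 + 2 * ‖R₁ ε (D (b i)) - D (b i)‖ ^ 2) :=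
          Summable.tsum_le_tsum hpt hXsum hsum2
      _ = 2 * (∑' i, ‖T' (b i)‖ ^ 2) + 2 * (∑' i, ‖R₁ ε (D (b i)) - D (b i)‖ ^ 2) := by
          rw [Summable.tsum_add (hT'sum.mul_left 2) ((hHsum ε hε).mul_left 2), tsum_mul_left, tsum_mul_left]
      _ = 2 * (∑' j, ‖S ε (Dd (b j)) - Dd (b j)‖ ^ 2)
          + 2 * (∑' i, ‖R₁ ε (D (b i)) - D (b i)‖ ^ 2) := by
          have heq : ∑' i, ‖T' (b i)‖ ^ 2
              = ∑' j, ‖S ε (Dd (b j)) - Dd (b j)‖ ^ 2 := by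
            rw [hT'tsum]
            exact tsum_congr fun j => by rw [hadjapp]
          rw [heq]
  -- conclusion by squeezing
  have hrhsT : Tendsto (fun ε => 2 * (∑' j, ‖S ε (Dd (b j)) - Dd (b j)‖ ^ 2)
      + 2 * (∑' i, ‖R₁ ε (D (b i)) - D (b i)‖ ^ 2)) (𝓝[>] (0:ℝ)) (𝓝 0) := by
    simpa using ((Gtends.const_mul 2).add (Htends.const_mul 2))
  have hsqrt : Tendsto (fun ε => Real.sqrt (2 * (∑' j, ‖S ε (Dd (b j)) - Dd (b j)‖ ^ 2)
      + 2 * (∑' i, ‖R₁ ε (D (b i)) - D (b i)‖ ^ 2))) (𝓝[>] (0:ℝ)) (𝓝 0) := by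
    have h := (Real.continuous_sqrt.tendsto 0).comp hrhsT
    simpa [Function.comp_def] using h
  refine squeeze_zero' ?_ ?_ hsqrt
  · filter_upwards with ε
    exact Real.sqrt_nonneg _
  · filter_upwards [self_mem_nhdsWithin] with ε (hε : ε ∈ Set.Ioi (0:ℝ))
    simp only [hsNorm]
    exact Real.sqrt_le_sqrt (key2 ε hε)
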